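/- arXiv:1505.05291 — 2 statements merged into one kernel-verified Lean document; each statement's English description precedes it below -/
import Mathlib

section
/- Let L ∈ ℕ ∪ {0}, set p = 2^{-L}, and let x be a sequence with ‖x‖_{ℓ^2} = 1. If ‖x‖_{ℓ^p}^p ≤ κ^{1-p/2} for some κ > 0, then ‖x‖_{ℓ^1}^2 ≤ κ. -/
/-! The map `r ↦ ∑ |x_j|^r` is log-convex (Hölder's inequality), and the exponent `1` is the convex
combination `θ p + (1 - θ) 2` with `θ = 1 / (2 - p)`. This gives
`‖x‖₁^(2 - p) ≤ ‖x‖_p^p ‖x‖₂^(2(1 - p)) = ‖x‖_p^p ≤ κ^(1 - p/2)`, and raising to the power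
`2 / (2 - p)` yields `‖x‖₁² ≤ κ`. -/

open Real

theorem summable_and_tsum_rpow_le_tsum_rpow_mul_tsum_rpow {ι : Type*} {a : ι → ℝ} {p q θ : ℝ}
    (ha : ∀ i, 0 ≤ a i) (hp : 0 ≤ p) (hq : 0 ≤ q) (hθ₀ : 0 < θ) (hθ₁ : θ < 1)
    (hap : Summable fun i => a i ^ p) (haq : Summable fun i => a i ^ q) :
    Summable (fun i => a i ^ (θ * p + (1 - θ) * q)) ∧
      ∑' i, a i ^ (θ * p + (1 - θ) * q) ≤
        (∑' i, a i ^ p) ^ θ * (∑' i, a i ^ q) ^ (1 - θ) := by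
  have hθ₁' : 0 < 1 - θ := sub_pos.mpr hθ₁
  have hpow : ∀ {s t : ℝ}, 0 < t → ∀ i, (a i ^ (t * s)) ^ t⁻¹ = a i ^ s := fun {s t} ht i => by
    rw [← rpow_mul (ha i), mul_comm t s, mul_inv_cancel_right₀ ht.ne']
  obtain ⟨hsum, hle⟩ := summable_and_inner_le_Lp_mul_Lq_tsum_of_nonneg
    (HolderConjugate.inv_inv hθ₀ hθ₁' (add_sub_cancel θ 1))
    (fun i => rpow_nonneg (ha i) (θ * p)) (fun i => rpow_nonneg (ha i) ((1 - θ) * q))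
    (by simpa only [hpow hθ₀] using hap) (by simpa only [hpow hθ₁'] using haq)
  simp only [← rpow_add_of_nonneg (ha _) (by positivity : 0 ≤ θ * p)
      (by positivity : 0 ≤ (1 - θ) * q), hpow hθ₀, hpow hθ₁', one_div, inv_inv] at hsum hle
  exact ⟨hsum, hle⟩

theorem summable_and_tsum_rpow_le_tsum_rpow_mul_tsum_sq {ι : Type*} {a : ι → ℝ} {p : ℝ}
    (ha : ∀ i, 0 ≤ a i) (hp₀ : 0 < p) (hp₁ : p ≤ 1)
    (hap : Summable fun i => a i ^ p) (ha2 : Summable fun i => a i ^ (2 : ℝ)) :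
    Summable a ∧ (∑' i, a i) ^ (2 - p) ≤ (∑' i, a i ^ p) * (∑' i, a i ^ (2 : ℝ)) ^ (1 - p) := by
  rcases hp₁.eq_or_lt with rfl | hp₁
  · simp only [rpow_one] at hap ⊢
    norm_num [hap]
  have h2p : 0 < 2 - p := by linarith
  obtain ⟨hsum, hle⟩ := summable_and_tsum_rpow_le_tsum_rpow_mul_tsum_rpow ha hp₀.le zero_le_two
    (one_div_pos.mpr h2p) ((div_lt_one h2p).mpr (by linarith)) hap ha2
  have hexp : 1 / (2 - p) * p + (1 - 1 / (2 - p)) * 2 = 1 := by field_simp; ring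
  simp only [hexp, rpow_one] at hsum hle
  refine ⟨hsum, ?_⟩
  calc (∑' i, a i) ^ (2 - p)
      ≤ ((∑' i, a i ^ p) ^ (1 / (2 - p)) * (∑' i, a i ^ (2 : ℝ)) ^ (1 - 1 / (2 - p))) ^ (2 - p) :=
        rpow_le_rpow (tsum_nonneg ha) hle h2p.le
    _ = (∑' i, a i ^ p) * (∑' i, a i ^ (2 : ℝ)) ^ (1 - p) := by
        have hSp : 0 ≤ ∑' i, a i ^ p := tsum_nonneg fun i => rpow_nonneg (ha i) p
        have hS2 : 0 ≤ ∑' i, a i ^ (2 : ℝ) := tsum_nonneg fun i => rpow_nonneg (ha i) 2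
        rw [mul_rpow (rpow_nonneg hSp _) (rpow_nonneg hS2 _), ← rpow_mul hSp, ← rpow_mul hS2,
          one_div_mul_cancel h2p.ne', rpow_one]
        congr 2
        field_simp
        ring

/-- Let `L ∈ ℕ`, `p = 2^{-L}`, and `x` a sequence with `‖x‖_{ℓ²} = 1`.
If `‖x‖_{ℓ^p}^p ≤ κ^{1-p/2}` for some `κ > 0`, then `‖x‖_{ℓ^1}^2 ≤ κ`. -/
theorem stmt_3 (x : ℕ → ℂ) (L : ℕ) (p κ : ℝ)
    (hp : p = (2 : ℝ) ^ (-(L : ℝ)))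
    (hκ : 0 < κ)
    (hl2 : ∑' j, ‖x j‖ ^ (2 : ℝ) = 1)
    (hsum2 : Summable fun j => ‖x j‖ ^ (2 : ℝ))
    (hsum : Summable fun j => ‖x j‖ ^ p)
    (hlp : ∑' j, ‖x j‖ ^ p ≤ κ ^ (1 - p / 2)) :
    Summable (fun j => ‖x j‖) ∧
      (∑' j, ‖x j‖) ^ 2 ≤ κ := by
  have hp₀ : 0 < p := hp ▸ rpow_pos_of_pos two_pos _
  have hp₁ : p ≤ 1 := hp ▸ rpow_le_one_of_one_le_of_nonpos one_le_two (by simp)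
  obtain ⟨hsum1, hinterp⟩ := summable_and_tsum_rpow_le_tsum_rpow_mul_tsum_sq
    (fun j => norm_nonneg (x j)) hp₀ hp₁ hsum hsum2
  rw [hl2, one_rpow, mul_one] at hinterp
  refine ⟨hsum1, ?_⟩
  have hS : 0 ≤ ∑' j, ‖x j‖ := tsum_nonneg fun j => norm_nonneg (x j)
  rw [← rpow_le_rpow_iff (by positivity) hκ.le (by linarith : 0 < 1 - p / 2), ← rpow_natCast,
    ← rpow_mul hS]
  calc (∑' j, ‖x j‖) ^ ((2 : ℕ) * (1 - p / 2)) = (∑' j, ‖x j‖) ^ (2 - p) := by push_cast; ring_nf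
    _ ≤ κ ^ (1 - p / 2) := hinterp.trans hlp
end

section
/- For each m ∈ {0,…,p−1} and n, the cyclically shifted Haar vector satisfies Σ_{l,k} |⟨\tilde h_{m,n} − h_{m,n}, h_{l,k}⟩| ≤ 4/(√2 − 1), where the sum ranges over all Haar basis vectors h_{l,k} of ℂ^{2^p}. -/
/-- The discrete Haar wavelet `h_{l,k}` on `ℂ^{2^P}` (0-indexed coordinates):
`h_{l,k}[j] = 2^{(l-P)/2}` on the first half of the dyadic block
`[k·2^{P-l}, (k+1)·2^{P-l})` and `-2^{(l-P)/2}` on the second half. -/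
noncomputable def haarVec (P l k : ℕ) : ℕ → ℂ := fun j =>
  if k * 2 ^ (P - l) ≤ j ∧ j < k * 2 ^ (P - l) + 2 ^ (P - l - 1) then
    (((2 : ℝ) ^ (((l : ℝ) - (P : ℝ)) / 2) : ℝ) : ℂ)
  else if k * 2 ^ (P - l) + 2 ^ (P - l - 1) ≤ j ∧ j < (k + 1) * 2 ^ (P - l) then
    -(((2 : ℝ) ^ (((l : ℝ) - (P : ℝ)) / 2) : ℝ) : ℂ)
  else 0

/-- Cyclic shift by one: `(shift v)[0] = v[N-1]`, `(shift v)[j] = v[j-1]`. -/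
def cyclicShift (N : ℕ) (v : ℕ → ℂ) : ℕ → ℂ := fun j => v ((j + N - 1) % N)

/-! The difference `h̃ − h` of a shifted Haar vector of scale `m` has ℓ¹-norm at most
`4·2^{(m-P)/2} ≤ 4`: `h` is `2^{(m-P)/2}` times a difference of two interval indicators, and
shifting an interval indicator changes it only at the two endpoints of the interval. For each
coordinate `j`, exactly one Haar vector of scale `l` is nonzero at `j`, with modulus
`2^{(l-P)/2}`; so by the triangle inequality the double sum is at most that ℓ¹-norm times
`Σ_{l<P} 2^{(l-P)/2} ≤ 1/(√2 - 1)`. -/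

open Finset

lemma norm_haarVec_le (P l k j : ℕ) :
    ‖haarVec P l k j‖ ≤ (2 : ℝ) ^ (((l : ℝ) - P) / 2) := by
  have h := (Real.rpow_pos_of_pos two_pos (((l : ℝ) - P) / 2)).le
  unfold haarVec
  split_ifs <;> simp [Complex.norm_real, abs_of_nonneg h, h]

lemma mem_block_of_haarVec_ne_zero {P l k j : ℕ} (h : haarVec P l k j ≠ 0) :
    k * 2 ^ (P - l) ≤ j ∧ j < (k + 1) * 2 ^ (P - l) := by
  have : 2 ^ (P - l - 1) ≤ 2 ^ (P - l) := Nat.pow_le_pow_right two_pos (Nat.sub_le _ _)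
  unfold haarVec at h
  split_ifs at h with h₁ h₂
  · constructor <;> nlinarith
  · exact ⟨(Nat.le_add_right _ _).trans h₂.1, h₂.2⟩
  · exact absurd rfl h

lemma sum_norm_haarVec_le (P l : ℕ) {j : ℕ} (hj : j < 2 ^ P) :
    ∑ k ∈ range (2 ^ l), ‖haarVec P l k j‖ ≤ (2 : ℝ) ^ (((l : ℝ) - P) / 2) := by
  have hblock : j / 2 ^ (P - l) ∈ range (2 ^ l) := by
    rw [mem_range, Nat.div_lt_iff_lt_mul (by positivity), ← pow_add]
    exact hj.trans_le (Nat.pow_le_pow_right two_pos (by omega))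
  rw [sum_eq_single_of_mem _ hblock]
  · exact norm_haarVec_le P l _ j
  · intro k _ hk
    by_contra hne
    obtain ⟨h₁, h₂⟩ := mem_block_of_haarVec_ne_zero (norm_ne_zero_iff.mp hne)
    exact hk (Nat.div_eq_of_lt_le h₁ h₂).symm

lemma sum_norm_inner_haarVec_le (P : ℕ) (d : ℕ → ℂ) :
    ∑ l ∈ range P, ∑ k ∈ range (2 ^ l),
      ‖∑ j ∈ range (2 ^ P), starRingEnd ℂ (d j) * haarVec P l k j‖ ≤
      (∑ j ∈ range (2 ^ P), ‖d j‖) * ∑ l ∈ range P, (2 : ℝ) ^ (((l : ℝ) - P) / 2) := by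
  calc _ ≤ ∑ l ∈ range P, ∑ k ∈ range (2 ^ l), ∑ j ∈ range (2 ^ P),
          ‖d j‖ * ‖haarVec P l k j‖ := by
        gcongr with l _ k _
        refine (norm_sum_le _ _).trans_eq ?_
        simp only [norm_mul, Complex.norm_conj]
    _ = ∑ j ∈ range (2 ^ P), ‖d j‖ *
          ∑ l ∈ range P, ∑ k ∈ range (2 ^ l), ‖haarVec P l k j‖ := by
        simp only [mul_sum]
        rw [sum_comm]
        exact sum_congr rfl fun l _ => sum_comm
    _ ≤ ∑ j ∈ range (2 ^ P), ‖d j‖ * ∑ l ∈ range P, (2 : ℝ) ^ (((l : ℝ) - P) / 2) := by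
        gcongr with j hj l
        exact sum_norm_haarVec_le P l (mem_range.mp hj)
    _ = _ := by rw [sum_mul]

lemma sum_two_rpow_sub_div_two_le (P : ℕ) :
    ∑ l ∈ range P, (2 : ℝ) ^ (((l : ℝ) - P) / 2) ≤ 1 / (√2 - 1) := by
  have hr : 1 < √2 := by simp [Real.lt_sqrt]
  have hr' : 0 < √2 - 1 := sub_pos.mpr hr
  have hpow : 0 < √2 ^ P := by positivity
  calc ∑ l ∈ range P, (2 : ℝ) ^ (((l : ℝ) - P) / 2)
      = (∑ l ∈ range P, √2 ^ l) / √2 ^ P := by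
        rw [sum_div]
        refine sum_congr rfl fun l _ => ?_
        rw [sub_div, Real.rpow_sub two_pos, Real.rpow_div_two_eq_sqrt _ zero_le_two,
          Real.rpow_div_two_eq_sqrt _ zero_le_two, Real.rpow_natCast, Real.rpow_natCast]
    _ = (√2 ^ P - 1) / (√2 - 1) / √2 ^ P := by rw [geom_sum_eq hr.ne']
    _ ≤ √2 ^ P / (√2 - 1) / √2 ^ P := by gcongr; linarith
    _ = 1 / (√2 - 1) := by field_simp

lemma cyclicShift_apply_zero (N : ℕ) (v : ℕ → ℂ) : cyclicShift N v 0 = v (N - 1) := by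
  rcases N with _ | N
  · rfl
  · simp [cyclicShift]

lemma cyclicShift_apply_of_pos {N j : ℕ} (v : ℕ → ℂ) (h₀ : 0 < j) (hN : j < N) :
    cyclicShift N v j = v (j - 1) := by
  simp only [cyclicShift]
  rw [show j + N - 1 = j - 1 + N by omega, Nat.add_mod_right, Nat.mod_eq_of_lt (by omega)]

lemma cyclicShift_indicator_Ico {N u w j : ℕ} (hw : w ≤ N) (hj : j < N)
    (hu : j ≠ u) (hw' : j ≠ w % N) :
    cyclicShift N ((Set.Ico u w).indicator 1) j = (Set.Ico u w).indicator 1 j := by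
  rcases Nat.eq_zero_or_pos j with rfl | hj₀
  · have : w ≠ N := fun h => hw' (by simp [h])
    rw [cyclicShift_apply_zero]
    simp only [Set.indicator, Set.mem_Ico]
    split_ifs <;> first | rfl | omega
  · rw [cyclicShift_apply_of_pos _ hj₀ hj]
    have : w ≠ j := fun h => hw' (by rw [← h, Nat.mod_eq_of_lt (by omega)])
    simp only [Set.indicator, Set.mem_Ico]
    split_ifs <;> first | rfl | omega

lemma sum_norm_cyclicShift_sub_indicator_Ico_le {N u w : ℕ} (hw : w ≤ N) :
    ∑ j ∈ range N, ‖cyclicShift N ((Set.Ico u w).indicator 1) j -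
      (Set.Ico u w).indicator 1 j‖ ≤ 2 := by
  set S : Finset ℕ := range N ∩ {u, w % N}
  have hjump : ∀ j ∈ range N, j ∉ S → ‖cyclicShift N ((Set.Ico u w).indicator 1) j -
      (Set.Ico u w).indicator 1 j‖ = 0 := by
    intro j hj hjS
    simp only [S, mem_inter, mem_insert, mem_singleton, not_and, not_or] at hjS
    obtain ⟨hu, hw'⟩ := hjS hj
    rw [cyclicShift_indicator_Ico hw (mem_range.mp hj) hu hw', sub_self, norm_zero]
  rw [← sum_subset inter_subset_left hjump]
  calc _ ≤ S.card • (1 : ℝ) := by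
        refine sum_le_card_nsmul _ _ _ fun j _ => ?_
        simp only [Set.indicator, Set.mem_Ico, cyclicShift]
        split_ifs <;> simp
    _ ≤ 2 := by
        rw [nsmul_one]
        exact_mod_cast (card_le_card inter_subset_right).trans card_le_two

lemma haarVec_eq_smul_indicator (P l k : ℕ) :
    haarVec P l k = (((2 : ℝ) ^ (((l : ℝ) - P) / 2) : ℝ) : ℂ) •
      ((Set.Ico (k * 2 ^ (P - l)) (k * 2 ^ (P - l) + 2 ^ (P - l - 1))).indicator 1 -
        (Set.Ico (k * 2 ^ (P - l) + 2 ^ (P - l - 1)) ((k + 1) * 2 ^ (P - l))).indicator 1) := by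
  funext j
  simp only [haarVec, Pi.smul_apply, Pi.sub_apply, Set.indicator, Set.mem_Ico, Pi.one_apply,
    smul_eq_mul]
  split_ifs <;> first | omega | simp

lemma sum_norm_cyclicShift_sub_haarVec_le {P m n : ℕ} (hm : m ≤ P) (hn : n < 2 ^ m) :
    ∑ j ∈ range (2 ^ P), ‖cyclicShift (2 ^ P) (haarVec P m n) j - haarVec P m n j‖ ≤ 4 := by
  set c : ℝ := (2 : ℝ) ^ (((m : ℝ) - P) / 2)
  set f := (Set.Ico (n * 2 ^ (P - m)) (n * 2 ^ (P - m) + 2 ^ (P - m - 1))).indicator (1 : ℕ → ℂ)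
  set g := (Set.Ico (n * 2 ^ (P - m) + 2 ^ (P - m - 1)) ((n + 1) * 2 ^ (P - m))).indicator
    (1 : ℕ → ℂ)
  have hc₀ : 0 ≤ c := by positivity
  have hc₁ : c ≤ 1 := Real.rpow_le_one_of_one_le_of_nonpos one_le_two
    (div_nonpos_of_nonpos_of_nonneg (by simpa using hm) zero_le_two)
  have hend : (n + 1) * 2 ^ (P - m) ≤ 2 ^ P := by
    calc (n + 1) * 2 ^ (P - m) ≤ 2 ^ m * 2 ^ (P - m) := Nat.mul_le_mul_right _ hn
      _ = 2 ^ P := by rw [← pow_add, Nat.add_sub_cancel' hm]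
  have hmid : n * 2 ^ (P - m) + 2 ^ (P - m - 1) ≤ 2 ^ P := by
    have : 2 ^ (P - m - 1) ≤ 2 ^ (P - m) := Nat.pow_le_pow_right two_pos (Nat.sub_le _ _)
    nlinarith
  have hsplit : ∀ j, cyclicShift (2 ^ P) (haarVec P m n) j - haarVec P m n j =
      c * ((cyclicShift (2 ^ P) f j - f j) - (cyclicShift (2 ^ P) g j - g j)) := by
    intro j
    simp only [haarVec_eq_smul_indicator P m n, cyclicShift, Pi.smul_apply, Pi.sub_apply,
      smul_eq_mul]
    ring
  calc _ = c * ∑ j ∈ range (2 ^ P),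
        ‖(cyclicShift (2 ^ P) f j - f j) - (cyclicShift (2 ^ P) g j - g j)‖ := by
        simp only [hsplit, norm_mul, Complex.norm_real, Real.norm_of_nonneg hc₀, mul_sum]
    _ ≤ c * (2 + 2) := by
        gcongr
        refine (sum_le_sum fun j _ => norm_sub_le _ _).trans ?_
        rw [sum_add_distrib]
        exact add_le_add (sum_norm_cyclicShift_sub_indicator_Ico_le hmid)
          (sum_norm_cyclicShift_sub_indicator_Ico_le hend)
    _ ≤ 4 := by linarith

/-- For each scale `m < P` and position `n < 2^m`, the cyclically shifted Haar vector
satisfies `Σ_{l,k} |⟨h̃_{m,n} − h_{m,n}, h_{l,k}⟩| ≤ 4/(√2 − 1)`. -/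
theorem stmt_8 (P m n : ℕ) (hm : m < P) (hn : n < 2 ^ m) :
    ∑ l ∈ Finset.range P, ∑ k ∈ Finset.range (2 ^ l),
      ‖∑ j ∈ Finset.range (2 ^ P),
        (starRingEnd ℂ) (cyclicShift (2 ^ P) (haarVec P m n) j - haarVec P m n j) *
          haarVec P l k j‖ ≤
      4 / (Real.sqrt 2 - 1) := by
  calc _ ≤ (∑ j ∈ range (2 ^ P), ‖cyclicShift (2 ^ P) (haarVec P m n) j - haarVec P m n j‖) *
        ∑ l ∈ range P, (2 : ℝ) ^ (((l : ℝ) - P) / 2) := sum_norm_inner_haarVec_le P _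
    _ ≤ 4 * (1 / (√2 - 1)) :=
        mul_le_mul (sum_norm_cyclicShift_sub_haarVec_le hm.le hn) (sum_two_rpow_sub_div_two_le P)
          (sum_nonneg fun _ _ => by positivity) zero_le_four
    _ = 4 / (√2 - 1) := mul_one_div _ _
end
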